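/- Let u be a Lyndon word of length ≥ 2 over a well-ordered alphabet with Shirshov factorization (u_L, u_R). If v is a Lyndon factor of u, then v is a factor of u_L, or a factor of u_R, or a prefix of u with |v| > |u_L|. -/

import Mathlib

variable {X : Type*} [LinearOrder X] [WellFoundedLT X]

/-- The partial order `≺` on words: `u ≺ v` iff `u = r ++ x :: s`, `v = r ++ y :: t`
with letters `x < y`. -/
def Prec (u v : List X) : Prop :=
  ∃ (r s t : List X) (x y : X), x < y ∧ u = r ++ x :: s ∧ v = r ++ y :: t

/-- The pseudo-lexicographic order: `u <_lex v` iff `v` is a proper prefix of `u` or `u ≺ v`. -/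
def PLex (u v : List X) : Prop :=
  (v <+: u ∧ v ≠ u) ∨ Prec u v

/-- `u ≤_lex v`. -/
def PLexLe (u v : List X) : Prop := u = v ∨ PLex u v

/-- A Lyndon word (Kharchenko convention): a nonempty word strictly greater in the
pseudo-lexicographic order than each of its proper nonempty suffixes. -/
def IsLyndon (u : List X) : Prop :=
  u ≠ [] ∧ ∀ v w : List X, u = v ++ w → v ≠ [] → w ≠ [] → PLex w u


/-- The Shirshov factorization of `u`: `u = uL ++ uR` where `uR` is the
pseudo-lexicographically largest proper (nonempty) suffix of `u`. -/
def IsShirshov (u uL uR : List X) : Prop :=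
  u = uL ++ uR ∧ uL ≠ [] ∧ uR ≠ [] ∧
    ∀ w : List X, w <:+ u → w ≠ u → w ≠ [] → w = uR ∨ PLex w uR

/-!
Split `v` along the Shirshov cut. If it lies on neither side and does not start at the
beginning of `u`, then `v = a ++ b` with `a` a nonempty proper suffix of `uL` and `b` a nonempty
prefix of `uR = b ++ s`. As `v` is Lyndon, its suffix `b` is strictly smaller than `v` at some
letter, so `uR = b ++ s ≺ v ++ s = a ++ uR`: the proper suffix `a ++ uR` of `u` beats `uR`,
contradicting the maximality of `uR`.
-/

section

variable {α : Type*} [LinearOrder α]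

theorem Prec.lex {u v : List α} (h : Prec u v) : List.Lex (· < ·) u v := by
  obtain ⟨r, s, t, x, y, hxy, rfl, rfl⟩ := h
  exact List.Lex.append_left _ (List.Lex.rel hxy) r

theorem Prec.append {u v : List α} (h : Prec u v) (s t : List α) : Prec (u ++ s) (v ++ t) := by
  obtain ⟨r, s', t', x, y, hxy, rfl, rfl⟩ := h
  exact ⟨r, s' ++ s, t' ++ t, x, y, hxy, by simp, by simp⟩

theorem Prec.not_isPrefix {u v : List α} (h : Prec u v) : ¬ u <+: v := by
  obtain ⟨r, s, t, x, y, hxy, rfl, rfl⟩ := h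
  rw [List.prefix_append_right_inj, List.cons_prefix_cons]
  exact fun h => hxy.ne h.1

theorem PLex.asymm {u v : List α} (h₁ : PLex u v) (h₂ : PLex v u) : False := by
  rcases h₁ with ⟨hvu, hne⟩ | hp₁ <;> rcases h₂ with ⟨huv, -⟩ | hp₂
  · exact hne (hvu.eq_of_length_le huv.length_le)
  · exact hp₂.not_isPrefix hvu
  · exact hp₁.not_isPrefix huv
  · exact _root_.asymm hp₁.lex hp₂.lex

theorem PLex.irrefl (u : List α) : ¬ PLex u u := fun h => h.asymm h

theorem IsLyndon.prec_of_eq_append {v a b : List α} (hv : IsLyndon v) (h : v = a ++ b)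
    (ha : a ≠ []) (hb : b ≠ []) : Prec b v := by
  rcases hv.2 a b h ha hb with ⟨hvb, -⟩ | hprec
  · have := hvb.length_le
    simp [h, List.length_eq_zero_iff, ha] at this
  · exact hprec

theorem IsShirshov.not_plex_right {u uL uR p w : List α} (hS : IsShirshov u uL uR)
    (hu : u = p ++ w) (hp : p ≠ []) (hw : w ≠ []) : ¬ PLex uR w := by
  have hwu : w ≠ u := fun h => hp (List.append_left_eq_self.mp (hu.symm.trans h.symm))
  rcases hS.2.2.2 w ⟨p, hu.symm⟩ hwu hw with rfl | hwR
  · exact PLex.irrefl w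
  · exact hwR.asymm

end

theorem lyndon_factor_trichotomy_general (u uL uR v : List X)
    (hS : IsShirshov u uL uR) (hv : IsLyndon v)
    (hf : v <:+: u) :
    v <:+: uL ∨ v <:+: uR ∨ (v <+: u ∧ uL.length < v.length) := by
  obtain rfl := hS.1
  rcases List.infix_append_iff_ne_nil.mp hf with h | h | ⟨a, b, ha, hb, rfl, ⟨p, rfl⟩, s, rfl⟩
  · exact Or.inl h
  · exact Or.inr (Or.inl h)
  rcases eq_or_ne p [] with rfl | hp
  · refine Or.inr (Or.inr ⟨⟨s, by simp⟩, ?_⟩)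
    simpa using List.length_pos_iff.mpr hb
  · have hRw : Prec (b ++ s) (a ++ (b ++ s)) := by
      simpa using (hv.prec_of_eq_append rfl ha hb).append s s
    exact absurd (Or.inr hRw) (hS.not_plex_right (by simp) hp (by simp [ha]))

/-- If `u` is a Lyndon word of length `≥ 2` with Shirshov
factorization `(uL, uR)` and `v` is a Lyndon factor of `u`, then `v` is a factor of
`uL`, or a factor of `uR`, or a prefix of `u` with `|v| > |uL|`. -/
theorem lyndon_factor_trichotomy (u uL uR v : List X) (hu : IsLyndon u)
    (hlen : 2 ≤ u.length) (hS : IsShirshov u uL uR) (hv : IsLyndon v)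
    (hf : v <:+: u) :
    v <:+: uL ∨ v <:+: uR ∨ (v <+: u ∧ uL.length < v.length) :=
  lyndon_factor_trichotomy_general u uL uR v hS hv hf
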